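/- If X is a random variable uniformly distributed on a set of size 2^F, and S_1,...,S_m are random variables with I(X; S_1,...,S_m) = 0 while H(X | S_1,...,S_n) = 0 for n > m, then H(S_{m+1},...,S_n) ≥ F. -/

import Mathlib

open scoped BigOperators

/-- Probability that random variable `X` takes value `x`, on a finite
probability space with mass function `p`. -/
noncomputable def probOf {Ω α : Type*} [Fintype Ω] [DecidableEq α]
    (p : Ω → ℝ) (X : Ω → α) (x : α) : ℝ :=
  ∑ ω, if X ω = x then p ω else 0

/-- Shannon entropy (in bits) of a random variable on a finite probability space. -/
noncomputable def entropy {Ω α : Type*} [Fintype Ω] [Fintype α] [DecidableEq α]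
    (p : Ω → ℝ) (X : Ω → α) : ℝ :=
  -∑ x, probOf p X x * Real.logb 2 (probOf p X x)

/-- Conditional entropy H(X | Y). -/
noncomputable def condEntropy {Ω α β : Type*} [Fintype Ω] [Fintype α] [DecidableEq α]
    [Fintype β] [DecidableEq β] (p : Ω → ℝ) (X : Ω → α) (Y : Ω → β) : ℝ :=
  entropy p (fun ω => (X ω, Y ω)) - entropy p Y

/-- Mutual information I(X ; Y). -/
noncomputable def mutualInfo {Ω α β : Type*} [Fintype Ω] [Fintype α] [DecidableEq α]
    [Fintype β] [DecidableEq β] (p : Ω → ℝ) (X : Ω → α) (Y : Ω → β) : ℝ :=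
  entropy p X - condEntropy p X Y

/-! Since the first `m` shares carry no information about `X`,
`H(X) = H(X, S_{<m}) - H(S_{<m}) ≤ H(X, S_{<n}) - H(S_{<m}) = H(S_{<n}) - H(S_{<m})`,
the last equality because all `n` shares determine `X`. Subadditivity of entropy bounds
`H(S_{<n}) ≤ H(S_{<m}) + H(S_{[m,n)})`, whence `F = H(X) ≤ H(S_{[m,n)})`. -/

open Real

lemma mul_log_sub_mul_log_le {q r : ℝ} (hr : 0 ≤ r) (hq : 0 ≤ q) (hqr : q = 0 → r = 0) :
    r * log q - r * log r ≤ q - r := by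
  rcases hr.eq_or_lt with rfl | hr
  · simpa using hq
  have hq : 0 < q := hq.lt_of_ne fun h => hr.ne' (hqr h.symm)
  calc r * log q - r * log r = r * log (q / r) := by
        rw [log_div hq.ne' hr.ne', mul_sub]
    _ ≤ r * (q / r - 1) := by gcongr; exact log_le_sub_one_of_pos (by positivity)
    _ = q - r := by field_simp

/-- Gibbs' inequality. -/
lemma sum_mul_logb_le_sum_mul_logb {ι : Type*} [Fintype ι] {b : ℝ} (hb : 1 < b)
    {q r : ι → ℝ} (hr : ∀ i, 0 ≤ r i) (hq : ∀ i, 0 ≤ q i)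
    (hqr : ∀ i, q i = 0 → r i = 0)
    (hsum : ∑ i, q i ≤ ∑ i, r i) :
    ∑ i, r i * logb b (q i) ≤ ∑ i, r i * logb b (r i) := by
  have hlog : ∑ i, (r i * log (q i) - r i * log (r i)) ≤ 0 := by
    calc ∑ i, (r i * log (q i) - r i * log (r i)) ≤ ∑ i, (q i - r i) :=
          Finset.sum_le_sum fun i _ => mul_log_sub_mul_log_le (hr i) (hq i) (hqr i)
      _ ≤ 0 := by rw [Finset.sum_sub_distrib]; linarith
  simp only [logb, ← mul_div_assoc, ← Finset.sum_div]
  rw [Finset.sum_sub_distrib] at hlog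
  exact div_le_div_of_nonneg_right (by linarith) (log_pos hb).le

section entropy

variable {Ω : Type*} [Fintype Ω] (p : Ω → ℝ)

lemma probOf_nonneg {α : Type*} [DecidableEq α] (hp0 : ∀ ω, 0 ≤ p ω) (X : Ω → α)
    (x : α) :
    0 ≤ probOf p X x :=
  Finset.sum_nonneg fun ω _ => by split_ifs <;> simp [hp0 ω]

lemma sum_probOf {α : Type*} [Fintype α] [DecidableEq α] (X : Ω → α) :
    ∑ x, probOf p X x = ∑ ω, p ω := by
  unfold probOf
  rw [Finset.sum_comm]
  simp

lemma sum_probOf_comp_mul {α β : Type*} [Fintype α] [DecidableEq α] [Fintype β]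
    [DecidableEq β]
    (X : Ω → α) (g : α → β) (f : β → ℝ) :
    ∑ y, probOf p (fun ω => g (X ω)) y * f y = ∑ x, probOf p X x * f (g x) := by
  simp only [probOf, Finset.sum_mul, ite_mul, zero_mul]
  rw [Finset.sum_comm, Finset.sum_comm (s := Finset.univ (α := α))]
  simp

lemma probOf_le_probOf_comp {α β : Type*} [DecidableEq α] [DecidableEq β]
    (hp0 : ∀ ω, 0 ≤ p ω) (X : Ω → α) (g : α → β) (x : α) :
    probOf p X x ≤ probOf p (fun ω => g (X ω)) (g x) :=
  Finset.sum_le_sum fun ω _ => by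
    by_cases h : X ω = x
    · simp [h]
    · simp only [h, if_false]; split_ifs <;> simp [hp0 ω]

lemma entropy_comp_eq {α β : Type*} [Fintype α] [DecidableEq α] [Fintype β] [DecidableEq β]
    (X : Ω → α) (g : α → β) :
    entropy p (fun ω => g (X ω)) =
      -∑ x, probOf p X x * logb 2 (probOf p (fun ω => g (X ω)) (g x)) := by
  rw [entropy, sum_probOf_comp_mul p X g]

lemma entropy_comp_le {α β : Type*} [Fintype α] [DecidableEq α] [Fintype β] [DecidableEq β]
    (hp0 : ∀ ω, 0 ≤ p ω) (X : Ω → α) (g : α → β) :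
    entropy p (fun ω => g (X ω)) ≤ entropy p X := by
  rw [entropy_comp_eq, entropy, neg_le_neg_iff]
  refine Finset.sum_le_sum fun x _ => ?_
  rcases (probOf_nonneg p hp0 X x).eq_or_lt with h | h
  · simp [← h]
  · gcongr
    · norm_num
    · exact probOf_le_probOf_comp p hp0 X g x

lemma entropy_pair_le {α β : Type*} [Fintype α] [DecidableEq α] [Fintype β] [DecidableEq β]
    (hp0 : ∀ ω, 0 ≤ p ω) (hp1 : ∑ ω, p ω = 1) (A : Ω → α) (B : Ω → β) :
    entropy p (fun ω => (A ω, B ω)) ≤ entropy p A + entropy p B := by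
  set r := probOf p (fun ω => (A ω, B ω))
  have hrA (x : α × β) : r x ≤ probOf p A x.1 :=
    probOf_le_probOf_comp p hp0 (fun ω => (A ω, B ω)) Prod.fst x
  have hrB (x : α × β) : r x ≤ probOf p B x.2 :=
    probOf_le_probOf_comp p hp0 (fun ω => (A ω, B ω)) Prod.snd x
  have hsplit : entropy p A + entropy p B =
      -∑ x, r x * logb 2 (probOf p A x.1 * probOf p B x.2) := by
    rw [entropy_comp_eq p (fun ω => (A ω, B ω)) Prod.fst,
      entropy_comp_eq p (fun ω => (A ω, B ω)) Prod.snd, ← neg_add, ← Finset.sum_add_distrib]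
    congr 1
    refine Finset.sum_congr rfl fun x _ => ?_
    rcases (probOf_nonneg p hp0 (fun ω => (A ω, B ω)) x).eq_or_lt with h | h
    · simp [r, ← h]
    · rw [← mul_add, logb_mul (h.trans_le (hrA x)).ne' (h.trans_le (hrB x)).ne']
  rw [hsplit, entropy, neg_le_neg_iff]
  refine sum_mul_logb_le_sum_mul_logb one_lt_two (probOf_nonneg p hp0 _)
    (fun x => mul_nonneg (probOf_nonneg p hp0 A x.1) (probOf_nonneg p hp0 B x.2))
    (fun x hx => ?_) ?_
  · rcases mul_eq_zero.mp hx with h | h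
    · exact le_antisymm (h ▸ hrA x) (probOf_nonneg p hp0 _ x)
    · exact le_antisymm (h ▸ hrB x) (probOf_nonneg p hp0 _ x)
  · rw [Fintype.sum_prod_type, ← Finset.sum_mul_sum, sum_probOf, sum_probOf, sum_probOf]
    simp [hp1]

lemma entropy_eq_logb_card_of_uniform {α : Type*} [Fintype α] [DecidableEq α] (X : Ω → α)
    (hX : ∀ x, probOf p X x = (Fintype.card α : ℝ)⁻¹) :
    entropy p X = logb 2 (Fintype.card α) := by
  simp only [entropy, hX, Finset.sum_const, Finset.card_univ, nsmul_eq_mul, logb_inv]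
  rcases eq_or_ne (Fintype.card α : ℝ) 0 with h | h
  · simp [h]
  · field_simp

variable {ι σ : Type*} [DecidableEq ι] [Fintype σ] [DecidableEq σ]

lemma entropy_pair_restrict_le_of_subset (hp0 : ∀ ω, 0 ≤ p ω) {α : Type*} [Fintype α]
    [DecidableEq α] (X : Ω → α) (S : ι → Ω → σ) {s t : Finset ι} (hst : s ⊆ t) :
    entropy p (fun ω => (X ω, fun i : s => S i ω)) ≤
      entropy p (fun ω => (X ω, fun i : t => S i ω)) :=
  entropy_comp_le p hp0 (fun ω => (X ω, fun i : t => S i ω))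
    fun q => (q.1, fun i : s => q.2 ⟨i, hst i.2⟩)

lemma entropy_restrict_le_pair_of_subset_union (hp0 : ∀ ω, 0 ≤ p ω) (S : ι → Ω → σ)
    {s t u : Finset ι} (hs : s ⊆ t ∪ u) :
    entropy p (fun ω (i : s) => S i ω) ≤
      entropy p (fun ω => (fun i : t => S i ω, fun i : u => S i ω)) := by
  have hglue := entropy_comp_le p hp0 (fun ω => (fun i : t => S i ω, fun i : u => S i ω))
    fun q (i : s) => if h : (i : ι) ∈ t then q.1 ⟨i, h⟩
      else q.2 ⟨i, (Finset.mem_union.mp (hs i.2)).resolve_left h⟩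
  refine le_of_eq_of_le (congrArg (entropy p) ?_) hglue
  funext ω i
  dsimp only
  split_ifs <;> rfl

end entropy

/-- If `X` is uniform on a set of size `2^F`, the first `m` shares are independent
of `X`, and all `n` shares (with `n > m`) determine `X`, then the remaining shares
`S_{m+1},…,S_n` have joint entropy at least `F`. -/
theorem shares_entropy_lower_bound
    {Ω σ : Type*} [Fintype Ω] [Fintype σ] [DecidableEq σ]
    (p : Ω → ℝ) (hp0 : ∀ ω, 0 ≤ p ω) (hp1 : ∑ ω, p ω = 1)
    (F n m : ℕ) (hmn : m < n)
    (X : Ω → Fin (2 ^ F)) (S : ℕ → Ω → σ)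
    (hunif : ∀ x, probOf p X x = ((2 ^ F : ℕ) : ℝ)⁻¹)
    (hindep : mutualInfo p X (fun ω => fun i : Finset.range m => S (i : ℕ) ω) = 0)
    (hrec : condEntropy p X (fun ω => fun i : Finset.range n => S (i : ℕ) ω) = 0) :
    entropy p (fun ω => fun i : Finset.Ico m n => S (i : ℕ) ω) ≥ (F : ℝ) := by
  have hX : entropy p X = F := by
    rw [entropy_eq_logb_card_of_uniform p X (by simpa using hunif), Fintype.card_fin,
      Nat.cast_pow, Nat.cast_ofNat, logb_pow, logb_self_eq_one one_lt_two, mul_one]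
  have hXS := entropy_pair_restrict_le_of_subset p hp0 X S
    (Finset.range_subset_range.mpr hmn.le)
  have hcover : Finset.range n ⊆ Finset.range m ∪ Finset.Ico m n := by
    rw [Finset.range_eq_Ico, Finset.range_eq_Ico,
      Finset.Ico_union_Ico_eq_Ico (Nat.zero_le m) hmn.le]
  have hS := entropy_restrict_le_pair_of_subset_union p hp0 S hcover
  have hsub := entropy_pair_le p hp0 hp1 (fun ω (i : Finset.range m) => S i ω)
    (fun ω (i : Finset.Ico m n) => S i ω)
  simp only [mutualInfo, condEntropy] at hindep hrec
  linarith
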